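/- arXiv:2408.06146 — 5 statements merged into one kernel-verified Lean document; each statement's English description precedes it below -/
import Mathlib

section
/- Let G be an undirected weighted graph on vertex set V, let G̃ be a degree-preserving reweighted subgraph of G, and let ε ≥ 0. If (1-ε)·L_G ≼ L_{G̃} ≼ (1+ε)·L_G and (1-ε)·U_G ≼ U_{G̃} ≼ (1+ε)·U_G, then for all vectors x, y ∈ ℝ^V: |xᵀ(A_G - A_{G̃})y| ≤ (ε/2)·(xᵀL_G x + yᵀL_G y) and |xᵀ(A_G - A_{G̃})y| ≤ (ε/2)·(xᵀU_G x + yᵀU_G y). -/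
open Matrix

/-- The diagonal matrix of weighted degrees (row sums) of an adjacency matrix. -/
def degMat {n : ℕ} (A : Matrix (Fin n) (Fin n) ℝ) : Matrix (Fin n) (Fin n) ℝ :=
  Matrix.diagonal (fun v => ∑ u, A v u)

/-- The Laplacian matrix `D - A` of an adjacency matrix. -/
def lap {n : ℕ} (A : Matrix (Fin n) (Fin n) ℝ) : Matrix (Fin n) (Fin n) ℝ :=
  degMat A - A

/-- The signless (unsigned) Laplacian matrix `D + A` of an adjacency matrix. -/
def signlessLap {n : ℕ} (A : Matrix (Fin n) (Fin n) ℝ) : Matrix (Fin n) (Fin n) ℝ :=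
  degMat A + A

/-- The number of edges of (the graph given by) an adjacency matrix:
the number of unordered pairs `{u,v}` with a nonzero entry. -/
noncomputable def edgeCount {n : ℕ} (B : Matrix (Fin n) (Fin n) ℝ) : ℕ :=
  ({p : Fin n × Fin n | p.1 < p.2 ∧ B p.1 p.2 ≠ 0}).ncard

/-- `B` is the adjacency matrix of a reweighted subgraph of the graph with adjacency matrix `A`. -/
def IsReweightedSubgraph {n : ℕ} (A B : Matrix (Fin n) (Fin n) ℝ) : Prop :=
  B.IsSymm ∧ (∀ u v, 0 ≤ B u v) ∧ (∀ u v, A u v = 0 → B u v = 0)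

/-- The reweighting `B` preserves the weighted degrees of `A`. -/
def DegreePreserving {n : ℕ} (A B : Matrix (Fin n) (Fin n) ℝ) : Prop :=
  ∀ v, ∑ u, B v u = ∑ u, A v u

/- The degree-preserving hypothesis makes `L_G̃ - (1 ∓ ε) L_G` and `U_G̃ - (1 ∓ ε) U_G` equal to
`ε L_G ± (A_G - A_G̃)` and `ε U_G ∓ (A_G - A_G̃)`, so both spectral conditions say that the symmetric
matrix `M = A_G - A_G̃` satisfies `-ε L ≼ M ≼ ε L` for `L = L_G`, resp. `L = U_G`. Polarization,
`4 xᵀ M y = (x + y)ᵀ M (x + y) - (x - y)ᵀ M (x - y)`, together with the parallelogram identity for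
`L` turns these quadratic-form bounds into the stated bilinear ones. -/

section Polarization

variable {ι : Type*} [Fintype ι]

lemma dotProduct_mulVec_comm_of_isSymm {R : Type*} [CommSemiring R] {M : Matrix ι ι R}
    (hM : M.IsSymm) (x y : ι → R) : y ⬝ᵥ (M *ᵥ x) = x ⬝ᵥ (M *ᵥ y) := by
  rw [dotProduct_mulVec, dotProduct_comm, ← vecMul_transpose, hM.eq]

lemma abs_dotProduct_mulVec_le_of_abs_quadratic_le {R : Type*} [Field R] [LinearOrder R]
    [IsStrictOrderedRing R] {M L : Matrix ι ι R} (hM : M.IsSymm) {c : R}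
    (hML : ∀ z, |z ⬝ᵥ (M *ᵥ z)| ≤ c * (z ⬝ᵥ (L *ᵥ z))) (x y : ι → R) :
    |x ⬝ᵥ (M *ᵥ y)| ≤ c / 2 * (x ⬝ᵥ (L *ᵥ x) + y ⬝ᵥ (L *ᵥ y)) := by
  have polarization :
      4 * (x ⬝ᵥ (M *ᵥ y)) = (x + y) ⬝ᵥ (M *ᵥ (x + y)) - (x - y) ⬝ᵥ (M *ᵥ (x - y)) := by
    simp only [mulVec_add, mulVec_sub, dotProduct_add, dotProduct_sub, add_dotProduct,
      sub_dotProduct, dotProduct_mulVec_comm_of_isSymm hM x y]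
    ring
  have parallelogram : (x + y) ⬝ᵥ (L *ᵥ (x + y)) + (x - y) ⬝ᵥ (L *ᵥ (x - y)) =
      2 * (x ⬝ᵥ (L *ᵥ x) + y ⬝ᵥ (L *ᵥ y)) := by
    simp only [mulVec_add, mulVec_sub, dotProduct_add, dotProduct_sub, add_dotProduct,
      sub_dotProduct]
    ring
  have h4 : |4 * (x ⬝ᵥ (M *ᵥ y))| ≤ 2 * c * (x ⬝ᵥ (L *ᵥ x) + y ⬝ᵥ (L *ᵥ y)) :=
    calc |4 * (x ⬝ᵥ (M *ᵥ y))|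
        ≤ |(x + y) ⬝ᵥ (M *ᵥ (x + y))| + |(x - y) ⬝ᵥ (M *ᵥ (x - y))| :=
          polarization ▸ abs_sub _ _
      _ ≤ c * ((x + y) ⬝ᵥ (L *ᵥ (x + y))) + c * ((x - y) ⬝ᵥ (L *ᵥ (x - y))) :=
          add_le_add (hML _) (hML _)
      _ = 2 * c * (x ⬝ᵥ (L *ᵥ x) + y ⬝ᵥ (L *ᵥ y)) := by rw [← mul_add, parallelogram]; ring
  rw [abs_mul, abs_of_pos four_pos] at h4
  linarith

lemma abs_dotProduct_mulVec_le_of_posSemidef {M L : Matrix ι ι ℝ} (hM : M.IsSymm) {c : ℝ}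
    (hle : (c • L - M).PosSemidef) (hge : (c • L + M).PosSemidef) (x y : ι → ℝ) :
    |x ⬝ᵥ (M *ᵥ y)| ≤ c / 2 * (x ⬝ᵥ (L *ᵥ x) + y ⬝ᵥ (L *ᵥ y)) := by
  refine abs_dotProduct_mulVec_le_of_abs_quadratic_le hM (fun z => abs_le.2 ⟨?_, ?_⟩) x y
  · have := hge.dotProduct_mulVec_nonneg z
    simp only [star_trivial, add_mulVec, dotProduct_add, smul_mulVec, dotProduct_smul,
      smul_eq_mul] at this
    linarith
  · have := hle.dotProduct_mulVec_nonneg z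
    simp only [star_trivial, sub_mulVec, dotProduct_sub, smul_mulVec, dotProduct_smul,
      smul_eq_mul] at this
    linarith

end Polarization

namespace DegreePreserving

variable {n : ℕ} {A B : Matrix (Fin n) (Fin n) ℝ}

lemma degMat_eq (h : DegreePreserving A B) : degMat B = degMat A :=
  congrArg diagonal (funext h)

lemma lap_eq (h : DegreePreserving A B) : lap B = lap A + (A - B) := by
  rw [lap, lap, h.degMat_eq]; abel

lemma signlessLap_eq (h : DegreePreserving A B) : signlessLap B = signlessLap A - (A - B) := by
  rw [signlessLap, signlessLap, h.degMat_eq]; abel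

end DegreePreserving

theorem uc_approximation_of_spectral_conditions_general
    (n : ℕ) (A B : Matrix (Fin n) (Fin n) ℝ) (ε : ℝ)
    (hA_symm : A.IsSymm)
    (hsub : IsReweightedSubgraph A B) (hdeg : DegreePreserving A B)
    (hL1 : (lap B - (1 - ε) • lap A).PosSemidef)
    (hL2 : ((1 + ε) • lap A - lap B).PosSemidef)
    (hU1 : (signlessLap B - (1 - ε) • signlessLap A).PosSemidef)
    (hU2 : ((1 + ε) • signlessLap A - signlessLap B).PosSemidef) :
    ∀ x y : Fin n → ℝ,
      |x ⬝ᵥ ((A - B) *ᵥ y)| ≤ (ε / 2) * (x ⬝ᵥ (lap A *ᵥ x) + y ⬝ᵥ (lap A *ᵥ y)) ∧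
      |x ⬝ᵥ ((A - B) *ᵥ y)| ≤
        (ε / 2) * (x ⬝ᵥ (signlessLap A *ᵥ x) + y ⬝ᵥ (signlessLap A *ᵥ y)) := by
  intro x y
  have hM : (A - B).IsSymm := hA_symm.sub hsub.1
  rw [hdeg.lap_eq] at hL1 hL2
  rw [hdeg.signlessLap_eq] at hU1 hU2
  constructor
  · refine abs_dotProduct_mulVec_le_of_posSemidef hM ?_ ?_ x y
    · convert hL2 using 1; module
    · convert hL1 using 1; module
  · refine abs_dotProduct_mulVec_le_of_posSemidef hM ?_ ?_ x y
    · convert hU1 using 1; module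
    · convert hU2 using 1; module

/-- Lemma 4.1: a degree-preserving reweighted subgraph whose Laplacian and signless
Laplacian are `ε`-spectral approximations is an `ε`-unit-circle approximation. -/
theorem uc_approximation_of_spectral_conditions
    (n : ℕ) (A B : Matrix (Fin n) (Fin n) ℝ) (ε : ℝ)
    (hA_symm : A.IsSymm) (hA_nonneg : ∀ u v, 0 ≤ A u v) (hA_diag : ∀ v, A v v = 0)
    (hsub : IsReweightedSubgraph A B) (hdeg : DegreePreserving A B)
    (hε : 0 ≤ ε)
    (hL1 : (lap B - (1 - ε) • lap A).PosSemidef)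
    (hL2 : ((1 + ε) • lap A - lap B).PosSemidef)
    (hU1 : (signlessLap B - (1 - ε) • signlessLap A).PosSemidef)
    (hU2 : ((1 + ε) • signlessLap A - signlessLap B).PosSemidef) :
    ∀ x y : Fin n → ℝ,
      |x ⬝ᵥ ((A - B) *ᵥ y)| ≤ (ε / 2) * (x ⬝ᵥ (lap A *ᵥ x) + y ⬝ᵥ (lap A *ᵥ y)) ∧
      |x ⬝ᵥ ((A - B) *ᵥ y)| ≤
        (ε / 2) * (x ⬝ᵥ (signlessLap A *ᵥ x) + y ⬝ᵥ (signlessLap A *ᵥ y)) :=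
  uc_approximation_of_spectral_conditions_general n A B ε hA_symm hsub hdeg hL1 hL2 hU1 hU2
end

section
/- Let G be a connected bipartite undirected weighted graph on n ≥ 2 vertices, let G̃ be a degree-preserving reweighted subgraph of G, let E := D_G − A_G·D_G⁻¹·A_G, and let ε ≥ 0. If −ε·E ≼ L_G − L_{G̃} ≼ ε·E, then for all x, y ∈ ℝ^V: |xᵀ(A_G − A_{G̃})y| ≤ (ε/2)·(xᵀE x + yᵀE y). -/
open Matrix

/-- The inverse of the diagonal degree matrix (its pseudoinverse in general:
over `ℝ`, `(0:ℝ)⁻¹ = 0`). -/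
noncomputable def degMatInv {n : ℕ} (A : Matrix (Fin n) (Fin n) ℝ) :
    Matrix (Fin n) (Fin n) ℝ :=
  Matrix.diagonal (fun v => (∑ u, A v u)⁻¹)

/-- `A` is the adjacency matrix of a bipartite graph. -/
def IsBipartiteAdj {n : ℕ} (A : Matrix (Fin n) (Fin n) ℝ) : Prop :=
  ∃ X : Set (Fin n), ∀ u v, ((u ∈ X ∧ v ∈ X) ∨ (u ∉ X ∧ v ∉ X)) → A u v = 0

/-- `A` is the adjacency matrix of a connected graph. -/
def IsConnectedAdj {n : ℕ} (A : Matrix (Fin n) (Fin n) ℝ) : Prop :=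
  (SimpleGraph.fromRel fun u v => 0 < A u v).Connected

/-!
Degree preservation makes `L_G - L_G̃ = A_G̃ - A_G`, so the hypothesis says that the quadratic form
of the symmetric matrix `M = A_G - A_G̃` is bounded in absolute value by `ε` times that of `E`.
Polarization, `4 xᵀM y = (x+y)ᵀM(x+y) - (x-y)ᵀM(x-y)`, together with the parallelogram law
`(x+y)ᵀE(x+y) + (x-y)ᵀE(x-y) = 2 (xᵀE x + yᵀE y)` turns this into the bilinear bound.
-/

section QuadraticForms

variable {ι : Type*} [Fintype ι]

theorem Matrix.add_dotProduct_mulVec_add_add_sub_dotProduct_mulVec_sub {R : Type*} [CommRing R]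
    (E : Matrix ι ι R) (x y : ι → R) :
    (x + y) ⬝ᵥ (E *ᵥ (x + y)) + (x - y) ⬝ᵥ (E *ᵥ (x - y)) =
      2 * (x ⬝ᵥ (E *ᵥ x) + y ⬝ᵥ (E *ᵥ y)) := by
  simp only [mulVec_add, mulVec_sub, dotProduct_add, dotProduct_sub, add_dotProduct,
    sub_dotProduct]
  ring

theorem Matrix.IsSymm.four_mul_dotProduct_mulVec {R : Type*} [CommRing R] {M : Matrix ι ι R}
    (hM : M.IsSymm) (x y : ι → R) :
    4 * (x ⬝ᵥ (M *ᵥ y)) =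
      (x + y) ⬝ᵥ (M *ᵥ (x + y)) - (x - y) ⬝ᵥ (M *ᵥ (x - y)) := by
  have hyx : y ⬝ᵥ (M *ᵥ x) = x ⬝ᵥ (M *ᵥ y) := by
    rw [dotProduct_mulVec, ← mulVec_transpose, hM.eq, dotProduct_comm]
  simp only [mulVec_add, mulVec_sub, dotProduct_add, dotProduct_sub, add_dotProduct,
    sub_dotProduct, hyx]
  ring

theorem abs_dotProduct_mulVec_le_of_posSemidef_s7 {P E : Matrix ι ι ℝ} {c : ℝ}
    (hlow : (P - (-c) • E).PosSemidef) (hupp : (c • E - P).PosSemidef) (z : ι → ℝ) :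
    |z ⬝ᵥ (P *ᵥ z)| ≤ c * (z ⬝ᵥ (E *ᵥ z)) := by
  have hl := hlow.dotProduct_mulVec_nonneg z
  have hu := hupp.dotProduct_mulVec_nonneg z
  simp only [star_trivial, sub_mulVec, smul_mulVec, dotProduct_sub, dotProduct_smul,
    smul_eq_mul] at hl hu
  rw [abs_le]
  constructor <;> linarith

theorem Matrix.IsSymm.abs_dotProduct_mulVec_le {M E : Matrix ι ι ℝ} (hM : M.IsSymm) {c : ℝ}
    (h : ∀ z, |z ⬝ᵥ (M *ᵥ z)| ≤ c * (z ⬝ᵥ (E *ᵥ z))) (x y : ι → ℝ) :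
    |x ⬝ᵥ (M *ᵥ y)| ≤ c / 2 * (x ⬝ᵥ (E *ᵥ x) + y ⬝ᵥ (E *ᵥ y)) := by
  have hpol := hM.four_mul_dotProduct_mulVec x y
  have hpar := E.add_dotProduct_mulVec_add_add_sub_dotProduct_mulVec_sub x y
  calc |x ⬝ᵥ (M *ᵥ y)|
      = |(x + y) ⬝ᵥ (M *ᵥ (x + y)) - (x - y) ⬝ᵥ (M *ᵥ (x - y))| / 4 := by
        rw [← hpol, abs_mul, abs_of_pos (four_pos : (0 : ℝ) < 4)]; ring
    _ ≤ (|(x + y) ⬝ᵥ (M *ᵥ (x + y))| + |(x - y) ⬝ᵥ (M *ᵥ (x - y))|) / 4 := by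
        gcongr; exact abs_sub _ _
    _ ≤ (c * ((x + y) ⬝ᵥ (E *ᵥ (x + y))) + c * ((x - y) ⬝ᵥ (E *ᵥ (x - y)))) / 4 := by
        gcongr <;> apply h
    _ = c / 2 * (x ⬝ᵥ (E *ᵥ x) + y ⬝ᵥ (E *ᵥ y)) := by
        rw [← mul_add, hpar]; ring

end QuadraticForms

theorem degMat_eq_of_degreePreserving {n : ℕ} {A B : Matrix (Fin n) (Fin n) ℝ}
    (hdeg : DegreePreserving A B) : degMat B = degMat A := by
  simp only [degMat, funext hdeg]

theorem lap_sub_lap_of_degreePreserving {n : ℕ} {A B : Matrix (Fin n) (Fin n) ℝ}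
    (hdeg : DegreePreserving A B) : lap A - lap B = -(A - B) := by
  rw [lap, lap, degMat_eq_of_degreePreserving hdeg]
  abel

theorem sv_approximation_of_loewner_condition_general
    (n : ℕ) (A B : Matrix (Fin n) (Fin n) ℝ) (ε : ℝ)
    (hA_symm : A.IsSymm)
    (hsub : IsReweightedSubgraph A B) (hdeg : DegreePreserving A B)
    (h1 : ((lap A - lap B) - (-ε) • (degMat A - A * degMatInv A * A)).PosSemidef)
    (h2 : (ε • (degMat A - A * degMatInv A * A) - (lap A - lap B)).PosSemidef) :
    ∀ x y : Fin n → ℝ,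
      |x ⬝ᵥ ((A - B) *ᵥ y)| ≤
        (ε / 2) *
          (x ⬝ᵥ ((degMat A - A * degMatInv A * A) *ᵥ x) +
           y ⬝ᵥ ((degMat A - A * degMatInv A * A) *ᵥ y)) := by
  rw [lap_sub_lap_of_degreePreserving hdeg] at h1 h2
  refine (hA_symm.sub hsub.1).abs_dotProduct_mulVec_le fun z => ?_
  simpa only [neg_mulVec, dotProduct_neg, abs_neg] using
    abs_dotProduct_mulVec_le_of_posSemidef_s7 h1 h2 z

/-- Lemma `fact:SV-conditions`: for a degree-preserving reweighted subgraph of a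
connected bipartite graph, `-ε E ≼ L_G - L_G̃ ≼ ε E` implies `ε`-SV approximation. -/
theorem sv_approximation_of_loewner_condition
    (n : ℕ) (A B : Matrix (Fin n) (Fin n) ℝ) (ε : ℝ)
    (hn : 2 ≤ n)
    (hA_symm : A.IsSymm) (hA_nonneg : ∀ u v, 0 ≤ A u v) (hA_diag : ∀ v, A v v = 0)
    (hbip : IsBipartiteAdj A) (hconn : IsConnectedAdj A)
    (hsub : IsReweightedSubgraph A B) (hdeg : DegreePreserving A B)
    (hε : 0 ≤ ε)
    (h1 : ((lap A - lap B) - (-ε) • (degMat A - A * degMatInv A * A)).PosSemidef)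
    (h2 : (ε • (degMat A - A * degMatInv A * A) - (lap A - lap B)).PosSemidef) :
    ∀ x y : Fin n → ℝ,
      |x ⬝ᵥ ((A - B) *ᵥ y)| ≤
        (ε / 2) *
          (x ⬝ᵥ ((degMat A - A * degMatInv A * A) *ᵥ x) +
           y ⬝ᵥ ((degMat A - A * degMatInv A * A) *ᵥ y)) :=
  sv_approximation_of_loewner_condition_general n A B ε hA_symm hsub hdeg h1 h2
end

section
/- Let A, B, C be symmetric real n×n matrices with A and B positive semidefinite. Then tr(A·C·B·C) ≤ tr(A·|C|)·tr(B·|C|). -/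
open Matrix

/-- The matrix absolute value of a symmetric real matrix `C`:
the positive semidefinite square root of `CᴴC = C²`. -/
noncomputable def matAbs {n : ℕ} (C : Matrix (Fin n) (Fin n) ℝ) : Matrix (Fin n) (Fin n) ℝ :=
  (Matrix.posSemidef_conjTranspose_mul_self C).1.eigenvectorUnitary.1 *
    diagonal ((↑) ∘ Real.sqrt ∘ (Matrix.posSemidef_conjTranspose_mul_self C).1.eigenvalues) *
    (star (Matrix.posSemidef_conjTranspose_mul_self C).1.eigenvectorUnitary : Matrix (Fin n) (Fin n) ℝ)

open Finset

/-!
Diagonalise `C = U diag(λ) Uᵀ`. Then `|C| = U diag|λ| Uᵀ`, and conjugating `A`, `B` by `U` keeps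
them positive semidefinite, so one may assume `C = diag λ`. There
`tr(A C B C) = ∑ᵢⱼ Aᵢⱼ Bⱼᵢ λᵢ λⱼ`, and `|Aᵢⱼ| ≤ √(Aᵢᵢ Aⱼⱼ)` bounds the sum by `(∑ᵢ rᵢ)²` with
`rᵢ = |λᵢ| √(Aᵢᵢ Bᵢᵢ)`; Cauchy–Schwarz gives `(∑ᵢ rᵢ)² ≤ (∑ᵢ |λᵢ| Aᵢᵢ) (∑ᵢ |λᵢ| Bᵢᵢ)`.
-/

variable {ι : Type*}

lemma Matrix.PosSemidef.sq_apply_le_mul {A : Matrix ι ι ℝ} (hA : A.PosSemidef) (i j : ι) :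
    A i j ^ 2 ≤ A i i * A j j := by
  have h := (hA.submatrix ![i, j]).det_nonneg
  rw [det_fin_two] at h
  simp only [submatrix_apply, Matrix.cons_val_zero, Matrix.cons_val_one] at h
  have hsym : A j i = A i j := by simpa using congrFun₂ hA.1 i j
  rw [hsym] at h
  linarith [sq (A i j)]

lemma Matrix.PosSemidef.abs_apply_le {A : Matrix ι ι ℝ} (hA : A.PosSemidef) (i j : ι) :
    |A i j| ≤ √(A i i) * √(A j j) := by
  rw [← Real.sqrt_mul hA.diag_nonneg]
  exact Real.abs_le_sqrt (hA.sq_apply_le_mul i j)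

section Conj
variable {m R : Type*} [Fintype ι] [Fintype m] [CommSemiring R]

lemma Matrix.trace_mul_conj (A : Matrix ι ι R) (U : Matrix ι m R) (D : Matrix m m R)
    (V : Matrix m ι R) : (A * (U * D * V)).trace = (V * A * U * D).trace := by
  rw [← Matrix.mul_assoc, trace_mul_comm]
  simp only [Matrix.mul_assoc]

lemma Matrix.trace_mul_conj_mul_mul_conj (A B : Matrix ι ι R) (U : Matrix ι m R)
    (D : Matrix m m R) (V : Matrix m ι R) :
    (A * (U * D * V) * B * (U * D * V)).trace = (V * A * U * D * (V * B * U) * D).trace := by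
  rw [show A * (U * D * V) * B * (U * D * V) = A * U * D * V * B * U * D * V by
    simp only [Matrix.mul_assoc], trace_mul_comm]
  simp only [Matrix.mul_assoc]

end Conj

variable [Fintype ι] [DecidableEq ι]

lemma Matrix.trace_mul_diagonal (A : Matrix ι ι ℝ) (d : ι → ℝ) :
    (A * diagonal d).trace = ∑ i, A i i * d i := by
  simp only [trace, diag, mul_diagonal]

lemma Matrix.trace_mul_diagonal_mul_mul_diagonal (A B : Matrix ι ι ℝ) (d : ι → ℝ) :
    (A * diagonal d * B * diagonal d).trace = ∑ i, ∑ j, A i j * d j * B j i * d i := by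
  simp only [trace, diag, mul_diagonal, mul_apply (M := A * diagonal d), sum_mul]

theorem Matrix.PosSemidef.trace_mul_diagonal_mul_mul_diagonal_le {A B : Matrix ι ι ℝ}
    (hA : A.PosSemidef) (hB : B.PosSemidef) (d : ι → ℝ) :
    (A * diagonal d * B * diagonal d).trace ≤
      (A * diagonal |d|).trace * (B * diagonal |d|).trace := by
  set r : ι → ℝ := fun i ↦ |d i| * (√(A i i) * √(B i i))
  have hterm (i j : ι) : A i j * d j * B j i * d i ≤ r i * r j := calc
    A i j * d j * B j i * d i ≤ |A i j * d j * B j i * d i| := le_abs_self _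
    _ = |A i j| * |B j i| * (|d i| * |d j|) := by simp only [abs_mul]; ring
    _ ≤ (√(A i i) * √(A j j)) * (√(B j j) * √(B i i)) * (|d i| * |d j|) := by
      gcongr
      exacts [hA.abs_apply_le i j, hB.abs_apply_le j i]
    _ = r i * r j := by ring
  have hr (i : ι) : r i ^ 2 = A i i * |d i| * (B i i * |d i|) := by
    simp only [r, mul_pow, Real.sq_sqrt hA.diag_nonneg, Real.sq_sqrt hB.diag_nonneg]
    ring
  calc (A * diagonal d * B * diagonal d).trace = ∑ i, ∑ j, A i j * d j * B j i * d i :=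
        trace_mul_diagonal_mul_mul_diagonal A B d
    _ ≤ ∑ i, ∑ j, r i * r j := sum_le_sum fun i _ ↦ sum_le_sum fun j _ ↦ hterm i j
    _ = (∑ i, r i) ^ 2 := by rw [sq, sum_mul_sum]
    _ ≤ (∑ i, A i i * |d i|) * ∑ i, B i i * |d i| :=
        sum_sq_le_sum_mul_sum_of_sq_le_mul _
          (fun i _ ↦ mul_nonneg hA.diag_nonneg (abs_nonneg _))
          (fun i _ ↦ mul_nonneg hB.diag_nonneg (abs_nonneg _)) (fun i _ ↦ (hr i).le)
    _ = (A * diagonal |d|).trace * (B * diagonal |d|).trace := by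
        simp only [trace_mul_diagonal, Pi.abs_apply]

lemma Matrix.IsHermitian.cfc_eq_mul_diagonal_mul {A : Matrix ι ι ℝ} (hA : A.IsHermitian)
    (f : ℝ → ℝ) :
    cfc f A = (hA.eigenvectorUnitary : Matrix ι ι ℝ) * diagonal (f ∘ hA.eigenvalues) *
      star (hA.eigenvectorUnitary : Matrix ι ι ℝ) := by
  rw [hA.cfc_eq]
  rfl

lemma matAbs_eq_cfc_abs {n : ℕ} {C : Matrix (Fin n) (Fin n) ℝ} (hC : C.IsHermitian) :
    matAbs C = cfc (fun x : ℝ ↦ |x|) C := by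
  have hsqrt : matAbs C = cfc Real.sqrt (Cᴴ * C) := by
    rw [(posSemidef_conjTranspose_mul_self C).1.cfc_eq]
    rfl
  rw [hsqrt, hC.eq, ← sq, ← cfc_comp_pow Real.sqrt 2 C]
  simp only [Real.sqrt_sq_eq_abs]

/-- Lemma 2.4 (Lemma 10 of Reis–Rothvoss):
`tr(ACBC) ≤ tr(A|C|) · tr(B|C|)` for `A, B ⪰ 0` and symmetric `C`. -/
theorem trace_ACBC_le (n : ℕ) (A B C : Matrix (Fin n) (Fin n) ℝ)
    (hA : A.PosSemidef) (hB : B.PosSemidef) (hC : C.IsSymm) :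
    (A * C * B * C).trace ≤ (A * matAbs C).trace * (B * matAbs C).trace := by
  have hH : C.IsHermitian := hC
  obtain ⟨U, d, hCU, hAbsU⟩ : ∃ (U : Matrix (Fin n) (Fin n) ℝ) (d : Fin n → ℝ),
      C = U * diagonal d * star U ∧ matAbs C = U * diagonal |d| * star U :=
    ⟨_, _, (cfc_id' ℝ C).symm.trans (hH.cfc_eq_mul_diagonal_mul id),
      (matAbs_eq_cfc_abs hH).trans (hH.cfc_eq_mul_diagonal_mul _)⟩
  rw [hAbsU, hCU, trace_mul_conj_mul_mul_conj, trace_mul_conj, trace_mul_conj]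
  exact (hA.conjTranspose_mul_mul_same U).trace_mul_diagonal_mul_mul_diagonal_le
    (hB.conjTranspose_mul_mul_same U) d
end

section
/- Let A, B be symmetric real n×n matrices with A positive definite, and let η > 0 satisfy ‖η·A⁻¹·B‖ ≤ 1/2, where ‖·‖ is the spectral norm. Then A − η·B is invertible and there exists c ∈ [-2, 2] such that tr((A − ηB)⁻¹) = tr(A⁻¹) + η·tr(A⁻¹ B A⁻¹) + c·η²·tr(A⁻¹ B A⁻¹ B A⁻¹). -/
/-!
Put `S = A^{-1/2}` and `X = S (η B) S`, a symmetric matrix. Then `(A - η B) S = A S (1 - X)`, so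
`(A - η B)⁻¹ = S (1 - X)⁻¹ S`. Since `S X = (η A⁻¹ B) S`, `X` is similar to `η A⁻¹ B`; as `X` is
self-adjoint its norm is its spectral radius, hence `‖X‖ ≤ ‖η A⁻¹ B‖ ≤ 1/2`. Expanding
`R = (1 - X)⁻¹` as `1 + X + X R X` produces `tr A⁻¹ + η tr (A⁻¹ B A⁻¹)` plus the remainder
`tr (S X R X S)`. Since `‖R‖ ≤ (1 - ‖X‖)⁻¹ ≤ 2`, the remainder is at most
`2 tr (S X X S) = 2 η² tr (A⁻¹ B A⁻¹ B A⁻¹)` in absolute value.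
-/

open Matrix Filter Topology
open scoped Matrix.Norms.L2Operator MatrixOrder

theorem le_of_forall_pow_two_pow_le_mul {x y C : ℝ} (hy : 0 ≤ y)
    (h : ∀ k : ℕ, x ^ 2 ^ k ≤ C * y ^ 2 ^ k) : x ≤ y := by
  by_contra! hxy
  have hx : 0 < x := hy.trans_lt hxy
  have hlim : Tendsto (fun k : ℕ => C * (y / x) ^ 2 ^ k) atTop (𝓝 0) := by
    simpa using ((tendsto_pow_atTop_nhds_zero_of_lt_one (div_nonneg hy hx.le)
      ((div_lt_one hx).2 hxy)).comp (tendsto_pow_atTop_atTop_of_one_lt one_lt_two)).const_mul C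
  obtain ⟨k, hk⟩ := (hlim.eventually (gt_mem_nhds one_pos)).exists
  rw [div_pow, ← mul_div_assoc, div_lt_one (by positivity)] at hk
  exact (h k).not_gt hk

theorem exists_mem_Icc_eq_mul_of_norm_le_mul {e t k K : ℝ} (hk : 0 ≤ k) (hkK : k ≤ K)
    (h : ‖e‖ ≤ k * t) : ∃ c ∈ Set.Icc (-K) K, e = c * t := by
  rw [Real.norm_eq_abs] at h
  rcases le_or_gt t 0 with ht | ht
  · refine ⟨0, by simp [hk.trans hkK], ?_⟩
    simpa using h.trans (mul_nonpos_of_nonneg_of_nonpos hk ht)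
  · refine ⟨e / t, ?_, (div_mul_cancel₀ e ht.ne').symm⟩
    rw [Set.mem_Icc, ← abs_le, abs_div, abs_of_pos ht, div_le_iff₀ ht]
    exact h.trans (by gcongr)

section Ring

variable {R : Type*} [Ring R]

theorem eq_one_add_add_mul_mul_of_mul_one_sub {r x : R} (hl : r * (1 - x) = 1)
    (hr : (1 - x) * r = 1) : r = 1 + x + x * r * x := by
  have hl' : r = 1 + r * x := by rw [← hl]; noncomm_ring
  have hr' : r = 1 + x * r := by rw [← hr]; noncomm_ring
  calc r = 1 + x * (1 + r * x) := by rw [← hl', ← hr']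
    _ = 1 + x + x * r * x := by noncomm_ring

theorem sub_mul_mul_mul_eq_one_of_mul_mul_self_eq_one {a c s r : R} (h : a * (s * s) = 1)
    (hr : (1 - s * c * s) * r = 1) : (a - c) * (s * r * s) = 1 := by
  have key : (a - c) * s = a * s * (1 - s * c * s) := by
    rw [mul_sub, mul_one, ← mul_assoc, ← mul_assoc, mul_assoc a, h, one_mul, sub_mul]
  calc (a - c) * (s * r * s) = a * s * ((1 - s * c * s) * r) * s := by
        rw [← mul_assoc, ← mul_assoc, key]; noncomm_ring
    _ = 1 := by rw [hr, mul_one, mul_assoc, h]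

end Ring

section CStarRing

variable {E : Type*} [NormedRing E] [StarRing E] [CStarRing E]

theorem IsSelfAdjoint.norm_le_of_semiconjBy {a b : E} {u : Eˣ} (ha : IsSelfAdjoint a)
    (h : SemiconjBy (u : E) a b) : ‖a‖ ≤ ‖b‖ := by
  refine le_of_forall_pow_two_pow_le_mul (C := ‖(↑u⁻¹ : E)‖ * ‖(u : E)‖) (norm_nonneg b) fun k => ?_
  have hconj : a ^ 2 ^ k = ↑u⁻¹ * (b ^ 2 ^ k * u) :=
    Units.eq_inv_mul_iff_mul_eq u |>.2 (h.pow_right _)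
  calc ‖a‖ ^ 2 ^ k = ‖a ^ 2 ^ k‖ := (ha.norm_pow_two_pow k).symm
    _ ≤ ‖(↑u⁻¹ : E)‖ * (‖b ^ 2 ^ k‖ * ‖(u : E)‖) := by
      rw [hconj]; exact (norm_mul_le _ _).trans (by gcongr; exact norm_mul_le _ _)
    _ ≤ ‖(↑u⁻¹ : E)‖ * (‖b‖ ^ 2 ^ k * ‖(u : E)‖) := by
      gcongr; exact norm_pow_le' b (Nat.two_pow_pos k)
    _ = _ := by ring

theorem IsSelfAdjoint.norm_conjugate_self_le {c s : E} (hc : IsSelfAdjoint c)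
    (hs : IsSelfAdjoint s) (hs_unit : IsUnit s) : ‖s * c * s‖ ≤ ‖s * s * c‖ :=
  (hc.conjugate_self hs).norm_le_of_semiconjBy (u := hs_unit.unit) (by
    simp only [SemiconjBy, IsUnit.unit_spec, mul_assoc])

theorem CStarRing.norm_inverse_one_sub_le [CompleteSpace E] {x : E} (hx : ‖x‖ < 1) :
    ‖Ring.inverse (1 - x)‖ ≤ (1 - ‖x‖)⁻¹ := by
  have := IsStarProjection.norm_le (1 : E) (.one E)
  rw [NormedRing.inverse_one_sub x hx]
  exact (tsum_geometric_le_of_norm_lt_one x hx).trans (by linarith)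

end CStarRing

theorem Matrix.norm_trace_mul_mul_conjTranspose_le {𝕜 m ι : Type*} [RCLike 𝕜] [Fintype m]
    [Fintype ι] [DecidableEq ι] (Q : Matrix m ι 𝕜) (R : Matrix ι ι 𝕜) :
    ‖(Q * R * Qᴴ).trace‖ ≤ ‖R‖ * RCLike.re (Q * Qᴴ).trace := by
  let v (i : m) : EuclideanSpace 𝕜 ι := WithLp.toLp 2 (star (Q i))
  have hdiag (i : m) : (Q * R * Qᴴ) i i = inner 𝕜 (v i)
      ((EuclideanSpace.equiv ι 𝕜).symm (R *ᵥ star (Q i))) := by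
    change _ = inner 𝕜 (WithLp.toLp 2 (star (Q i))) (WithLp.toLp 2 (R *ᵥ star (Q i)))
    rw [EuclideanSpace.inner_toLp_toLp, star_star, dotProduct_comm, dotProduct_mulVec, mul_apply']
    rfl
  have hsq (i : m) : RCLike.re ((Q * Qᴴ) i i) = ‖v i‖ ^ 2 := by
    rw [EuclideanSpace.norm_sq_eq, mul_apply, map_sum]
    refine Finset.sum_congr rfl fun k _ => ?_
    simp [v, RCLike.mul_conj]
  have hbound (i : m) : ‖(Q * R * Qᴴ) i i‖ ≤ ‖R‖ * ‖v i‖ ^ 2 := by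
    rw [hdiag]
    calc _ ≤ ‖v i‖ * ‖(EuclideanSpace.equiv ι 𝕜).symm (R *ᵥ star (Q i))‖ := norm_inner_le_norm _ _
      _ ≤ ‖v i‖ * (‖R‖ * ‖v i‖) := by gcongr; exact R.l2_opNorm_mulVec (v i)
      _ = ‖R‖ * ‖v i‖ ^ 2 := by ring
  calc ‖(Q * R * Qᴴ).trace‖ ≤ ∑ i, ‖(Q * R * Qᴴ) i i‖ := norm_sum_le _ _
    _ ≤ ∑ i, ‖R‖ * ‖v i‖ ^ 2 := Finset.sum_le_sum fun i _ => hbound i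
    _ = ‖R‖ * RCLike.re (Q * Qᴴ).trace := by
      simp only [trace, diag, map_sum, hsq, Finset.mul_sum]

theorem Matrix.exists_trace_mul_inverse_one_sub_mul_eq {ι : Type*} [Fintype ι] [DecidableEq ι]
    {S X : Matrix ι ι ℝ} (hS : IsSelfAdjoint S) (hX : IsSelfAdjoint X) (hX_lt : ‖X‖ < 1) :
    ∃ c ∈ Set.Icc (-(1 - ‖X‖)⁻¹) (1 - ‖X‖)⁻¹,
      (S * Ring.inverse (1 - X) * S).trace =
        (S * S).trace + (S * X * S).trace + c * (S * X * X * S).trace := by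
  set R := Ring.inverse (1 - X)
  have hu : IsUnit (1 - X) := ⟨Units.oneSub X hX_lt, rfl⟩
  have hR : R = 1 + X + X * R * X :=
    eq_one_add_add_mul_mul_of_mul_one_sub (Ring.inverse_mul_cancel _ hu)
      (Ring.mul_inverse_cancel _ hu)
  have hSX : (S * X)ᴴ = X * S := by
    rw [conjTranspose_mul, ← star_eq_conjTranspose, ← star_eq_conjTranspose, hS.star_eq,
      hX.star_eq]
  obtain ⟨c, hc, hE⟩ := exists_mem_Icc_eq_mul_of_norm_le_mul (norm_nonneg R)
    (CStarRing.norm_inverse_one_sub_le hX_lt) (norm_trace_mul_mul_conjTranspose_le (S * X) R)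
  rw [hSX, RCLike.re_to_real] at hE
  refine ⟨c, hc, ?_⟩
  calc (S * R * S).trace = (S * S + S * X * S + S * X * R * (X * S)).trace := by
        nth_rewrite 1 [hR]; congr 1; noncomm_ring
    _ = (S * S).trace + (S * X * S).trace + c * (S * X * X * S).trace := by
        rw [trace_add, trace_add, hE]; simp only [mul_assoc]

theorem trace_inverse_perturbation_general (n : ℕ) (A B : Matrix (Fin n) (Fin n) ℝ) (η : ℝ)
    (hA : A.PosDef) (hB : B.IsSymm)
    (hnorm : ‖η • (A⁻¹ * B)‖ ≤ 1 / 2) :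
    IsUnit (A - η • B).det ∧
    ∃ c ∈ Set.Icc (-2 : ℝ) 2,
      ((A - η • B)⁻¹).trace =
        (A⁻¹).trace + η * (A⁻¹ * B * A⁻¹).trace +
          c * η ^ 2 * (A⁻¹ * B * A⁻¹ * B * A⁻¹).trace := by
  obtain ⟨S, hS_unit, hS, hSS⟩ : ∃ S : Matrix (Fin n) (Fin n) ℝ,
      IsUnit S ∧ IsSelfAdjoint S ∧ S * S = A⁻¹ :=
    ⟨CFC.sqrt A⁻¹, hA.inv.isStrictlyPositive.isUnit_cfcSqrt, (CFC.sqrt_nonneg _).isSelfAdjoint,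
      CFC.sqrt_mul_sqrt_self _ hA.inv.posSemidef.nonneg⟩
  have hηB : IsSelfAdjoint (η • B) :=
    (IsSelfAdjoint.all η).smul (isHermitian_iff_isSymm.2 hB).isSelfAdjoint
  set X := S * (η • B) * S
  have hX_norm : ‖X‖ ≤ 1 / 2 :=
    (hηB.norm_conjugate_self_le hS hS_unit).trans (by rwa [hSS, mul_smul_comm])
  have hX_lt : ‖X‖ < 1 := hX_norm.trans_lt (by norm_num)
  have hright : (A - η • B) * (S * Ring.inverse (1 - X) * S) = 1 :=
    sub_mul_mul_mul_eq_one_of_mul_mul_self_eq_one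
      (by rw [hSS, mul_nonsing_inv _ hA.det_pos.ne'.isUnit])
      (Ring.mul_inverse_cancel _ ⟨Units.oneSub X hX_lt, rfl⟩)
  refine ⟨isUnit_det_of_right_inverse hright, ?_⟩
  obtain ⟨c, hc, hexp⟩ :=
    exists_trace_mul_inverse_one_sub_mul_eq hS (hηB.conjugate_self hS) hX_lt
  have hc_bound : (1 - ‖X‖)⁻¹ ≤ 2 := inv_le_of_inv_le₀ two_pos (by linarith)
  have hSXS : S * X * S = η • (A⁻¹ * B * A⁻¹) := by
    simp only [X, ← hSS, mul_smul_comm, smul_mul_assoc, mul_assoc]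
  have hSXXS : S * X * X * S = η ^ 2 • (A⁻¹ * B * A⁻¹ * B * A⁻¹) := by
    simp only [X, ← hSS, mul_smul_comm, smul_mul_assoc, mul_assoc, smul_smul, sq]
  refine ⟨c, Set.Icc_subset_Icc (neg_le_neg hc_bound) hc_bound hc, ?_⟩
  rw [inv_eq_right_inv hright, hexp, hSS, hSXS, hSXXS, trace_smul, trace_smul, smul_eq_mul,
    smul_eq_mul]
  ring

/-- Lemma 2.5 (Lemma 11 of Reis–Rothvoss): second-order approximation of the
trace inverse under perturbation. -/
theorem trace_inverse_perturbation (n : ℕ) (A B : Matrix (Fin n) (Fin n) ℝ) (η : ℝ)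
    (hA : A.PosDef) (hB : B.IsSymm) (hη : 0 < η)
    (hnorm : ‖η • (A⁻¹ * B)‖ ≤ 1 / 2) :
    IsUnit (A - η • B).det ∧
    ∃ c ∈ Set.Icc (-2 : ℝ) 2,
      ((A - η • B)⁻¹).trace =
        (A⁻¹).trace + η * (A⁻¹ * B * A⁻¹).trace +
          c * η ^ 2 * (A⁻¹ * B * A⁻¹ * B * A⁻¹).trace :=
  trace_inverse_perturbation_general n A B η hA hB hnorm
end

section
/- Let X be a symmetric real n×n matrix with n ≥ 1 and η > 0. Then there exists a unique u ∈ ℝ such that u·I_n − η·X is positive definite and tr((u·I_n − η·X)^{-2}) = 1. Moreover, for this u, the matrix M := (u·I_n − η·X)^{-2} is the unique maximizer over all density matrices M' of the function M' ↦ tr(X·M') + (2/η)·tr(√M'), and the maximum value Φ_η(X) := sup_{M' density matrix} [tr(X·M') + (2/η)·tr(√M')] equals (1/η)·tr((u·I_n − η·X)⁻¹) + u/η. -/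
/-!
Diagonalising `X = V diag(λ) Vᵀ`, the matrix `A = u • 1 - η • X` is positive definite iff
`η λᵢ < u` for all `i`, and then `tr A⁻² = ∑ᵢ (u - η λᵢ)⁻²`. On `(η max λ, ∞)` this sum is
continuous and strictly decreasing from `+∞` to `0`, so exactly one `u` makes it `1`.

For a density matrix `M` with `S = √M`, expanding `tr((S - A⁻¹) A (S - A⁻¹))` and using
`tr S² = 1` gives `η (tr(XM) + (2/η) tr S) = u + tr A⁻¹ - tr((S - A⁻¹) A (S - A⁻¹))`.
The subtracted trace is nonnegative and vanishes only for `S = A⁻¹`, i.e. `M = A⁻²`, which is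
therefore the unique maximiser, with value `(u + tr A⁻¹) / η`.
-/

open Matrix

open Classical in
/-- The positive semidefinite square root of a matrix (zero if the matrix is not
positive semidefinite). -/
noncomputable def psdSqrt {n : ℕ} (M : Matrix (Fin n) (Fin n) ℝ) :
    Matrix (Fin n) (Fin n) ℝ :=
  if h : M.PosSemidef then (h.1.eigenvectorUnitary : Matrix (Fin n) (Fin n) ℝ) *
    diagonal (Real.sqrt ∘ h.1.eigenvalues) *
    (star h.1.eigenvectorUnitary : Matrix (Fin n) (Fin n) ℝ) else 0

/-- The `ℓ_{1/2}`-regularized maximum-eigenvalue potential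
`Φ_η(X) = sup { tr(X M) + (2/η) tr(√M) : M a density matrix }`. -/
noncomputable def potential {n : ℕ} (η : ℝ) (X : Matrix (Fin n) (Fin n) ℝ) : ℝ :=
  sSup {r : ℝ | ∃ M : Matrix (Fin n) (Fin n) ℝ, M.PosSemidef ∧ M.trace = 1 ∧
    r = (X * M).trace + (2 / η) * (psdSqrt M).trace}

open Unitary
open scoped MatrixOrder ComplexOrder

lemma strictAntiOn_sum_inv_sub_sq {ι : Type*} [Fintype ι] [Nonempty ι] (c : ι → ℝ) :
    StrictAntiOn (fun u => ∑ i, ((u - c i)⁻¹) ^ 2)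
      (Set.Ioi (Finset.univ.sup' Finset.univ_nonempty c)) := by
  intro u hu v _ huv
  refine Finset.sum_lt_sum_of_nonempty Finset.univ_nonempty fun i _ => ?_
  have hpos : 0 < u - c i := sub_pos.mpr ((Finset.sup'_lt_iff _).mp hu i (Finset.mem_univ i))
  exact pow_lt_pow_left₀ (inv_strictAnti₀ hpos (show u - c i < v - c i by linarith))
    (inv_nonneg.mpr (by linarith)) two_ne_zero

lemma existsUnique_sum_inv_sub_sq_eq_one {ι : Type*} [Fintype ι] [Nonempty ι] (c : ι → ℝ) :
    ∃! u : ℝ, (∀ i, c i < u) ∧ ∑ i, ((u - c i)⁻¹) ^ 2 = 1 := by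
  obtain ⟨i₀, -, hi₀⟩ := Finset.exists_mem_eq_sup' Finset.univ_nonempty c
  set m := Finset.univ.sup' Finset.univ_nonempty c
  have hlt_iff : ∀ u, (∀ i, c i < u) ↔ m < u := fun u => by simp [m, Finset.sup'_lt_iff]
  have hle : ∀ i, c i ≤ m := fun i => Finset.le_sup' c (Finset.mem_univ i)
  set N : ℝ := (Fintype.card ι : ℝ)
  have hN : 1 ≤ N := Nat.one_le_cast.mpr Fintype.card_pos
  have hcont : ContinuousOn (fun u => ∑ i, ((u - c i)⁻¹) ^ 2) (Set.Icc (m + 1) (m + N)) :=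
    continuousOn_finsetSum _ fun i _ => ((continuousOn_id.sub continuousOn_const).inv₀
      fun u hu => (sub_pos.mpr (show c i < u by linarith [hle i, hu.1])).ne').pow 2
  have hleft : 1 ≤ ∑ i, ((m + 1 - c i)⁻¹) ^ 2 :=
    calc (1 : ℝ) = ((m + 1 - c i₀)⁻¹) ^ 2 := by rw [← hi₀]; norm_num
      _ ≤ _ := Finset.single_le_sum (f := fun i => ((m + 1 - c i)⁻¹) ^ 2)
          (fun i _ => sq_nonneg _) (Finset.mem_univ i₀)
  have hright : ∑ i, ((m + N - c i)⁻¹) ^ 2 ≤ 1 :=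
    calc ∑ i, ((m + N - c i)⁻¹) ^ 2 ≤ ∑ _i : ι, (N⁻¹) ^ 2 :=
          Finset.sum_le_sum fun i _ => pow_le_pow_left₀ (inv_nonneg.mpr (by linarith [hle i]))
            (inv_anti₀ (by linarith) (by linarith [hle i])) 2
      _ = N * (N⁻¹) ^ 2 := by simp [N]
      _ = N⁻¹ := by field_simp
      _ ≤ 1 := inv_le_one_of_one_le₀ hN
  obtain ⟨u, hu, hu_eq⟩ := intermediate_value_Icc' (by linarith) hcont ⟨hright, hleft⟩
  have hmu : m < u := by linarith [hu.1]
  refine ⟨u, ⟨(hlt_iff u).mpr hmu, hu_eq⟩, fun v hv => ?_⟩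
  exact (strictAntiOn_sum_inv_sub_sq c).injOn ((hlt_iff v).mp hv.1) hmu (hv.2.trans hu_eq.symm)

namespace Matrix

variable {n R : Type*} [Fintype n] [DecidableEq n]

section Unitary

variable (U : unitary (Matrix n n ℝ))

lemma trace_conjStarAlgAut (M : Matrix n n ℝ) : (conjStarAlgAut ℝ _ U M).trace = M.trace := by
  rw [conjStarAlgAut_apply, trace_mul_cycle, coe_star_mul_self, one_mul]

lemma inv_conjStarAlgAut_diagonal {d : n → ℝ} (hd : ∀ i, d i ≠ 0) :
    (conjStarAlgAut ℝ _ U (diagonal d))⁻¹ = conjStarAlgAut ℝ _ U (diagonal d⁻¹) := by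
  refine inv_eq_left_inv ?_
  rw [← map_mul, diagonal_mul_diagonal, ← map_one (conjStarAlgAut ℝ _ U), ← diagonal_one]
  exact congrArg _ (congrArg diagonal (funext fun i => inv_mul_cancel₀ (hd i)))

lemma posDef_conjStarAlgAut_diagonal_iff (d : n → ℝ) :
    (conjStarAlgAut ℝ _ U (diagonal d)).PosDef ↔ ∀ i, 0 < d i := by
  simp [isUnit_coe.posDef_star_right_conjugate_iff]

lemma trace_inv_conjStarAlgAut_diagonal_sq {d : n → ℝ} (hd : ∀ i, d i ≠ 0) :
    ((conjStarAlgAut ℝ _ U (diagonal d))⁻¹ ^ 2).trace = ∑ i, (d i)⁻¹ ^ 2 := by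
  rw [inv_conjStarAlgAut_diagonal U hd, ← map_pow, trace_conjStarAlgAut, diagonal_pow,
    trace_diagonal]
  rfl

end Unitary

lemma IsHermitian.smul_one_sub_smul_eq {X : Matrix n n ℝ} (hX : X.IsHermitian) (u η : ℝ) :
    u • 1 - η • X =
      conjStarAlgAut ℝ _ hX.eigenvectorUnitary (diagonal fun i => u - η * hX.eigenvalues i) := by
  conv_lhs => rw [hX.spectral_theorem]
  rw [← map_one (conjStarAlgAut ℝ _ hX.eigenvectorUnitary), ← map_smul, ← map_smul, ← map_sub]
  congr 1
  ext i j
  by_cases h : i = j <;> simp [h]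

lemma IsHermitian.posDef_smul_one_sub_smul_iff {X : Matrix n n ℝ} (hX : X.IsHermitian)
    (u η : ℝ) :
    (u • 1 - η • X).PosDef ↔ ∀ i, η * hX.eigenvalues i < u := by
  simp only [hX.smul_one_sub_smul_eq, posDef_conjStarAlgAut_diagonal_iff, sub_pos]

lemma IsHermitian.trace_inv_smul_one_sub_smul_sq {X : Matrix n n ℝ} (hX : X.IsHermitian)
    {u η : ℝ} (h : ∀ i, η * hX.eigenvalues i < u) :
    ((u • 1 - η • X)⁻¹ ^ 2).trace = ∑ i, ((u - η * hX.eigenvalues i)⁻¹) ^ 2 := by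
  rw [hX.smul_one_sub_smul_eq,
    trace_inv_conjStarAlgAut_diagonal_sq _ fun i => (sub_pos.mpr (h i)).ne']

lemma PosDef.trace_conjTranspose_mul_mul_same_eq_zero_iff [RCLike R] {A : Matrix n n R}
    (hA : A.PosDef) (D : Matrix n n R) : (Dᴴ * A * D).trace = 0 ↔ D = 0 := by
  refine ⟨fun h => ?_, fun h => by simp [h]⟩
  have hzero := ((hA.posSemidef.conjTranspose_mul_mul_same D).trace_eq_zero_iff).mp h
  refine ext_iff_mulVec.mpr fun v => ?_
  rw [zero_mulVec]
  by_contra hv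
  have hpos : 0 < star v ⬝ᵥ ((Dᴴ * A * D) *ᵥ v) := by
    simpa only [star_mulVec, dotProduct_mulVec, vecMul_vecMul] using hA.dotProduct_mulVec_pos hv
  simp [hzero] at hpos

lemma trace_sub_inv_mul_mul_sub_inv [CommRing R] {A : Matrix n n R} (hA : IsUnit A.det)
    (S : Matrix n n R) :
    ((S - A⁻¹) * A * (S - A⁻¹)).trace = (A * (S * S)).trace - 2 * S.trace + A⁻¹.trace := by
  have hexpand : (S - A⁻¹) * A * (S - A⁻¹) = S * A * S - S * (A * A⁻¹) - (A⁻¹ * A) * S +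
      A⁻¹ * (A * A⁻¹) := by noncomm_ring
  rw [hexpand, mul_nonsing_inv A hA, nonsing_inv_mul A hA, trace_add, trace_sub, trace_sub,
    trace_mul_cycle, trace_mul_comm (S * S), mul_one, one_mul, mul_one]
  ring

end Matrix

noncomputable def potentialObjective {n : ℕ} (η : ℝ) (X M : Matrix (Fin n) (Fin n) ℝ) : ℝ :=
  (X * M).trace + (2 / η) * (psdSqrt M).trace

section

variable {n : ℕ} {X A M : Matrix (Fin n) (Fin n) ℝ} {u η : ℝ}

lemma psdSqrt_eq_sqrt (hM : M.PosSemidef) : psdSqrt M = CFC.sqrt M := by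
  rw [CFC.sqrt_eq_real_sqrt M hM.nonneg, cfcₙ_eq_cfc, hM.1.cfc_eq, IsHermitian.cfc,
    psdSqrt, dif_pos hM, conjStarAlgAut_apply]
  rfl

lemma psdSqrt_posSemidef (hM : M.PosSemidef) : (psdSqrt M).PosSemidef :=
  psdSqrt_eq_sqrt hM ▸ (CFC.sqrt_nonneg M).posSemidef

lemma psdSqrt_pow_two (hA : A.PosSemidef) : psdSqrt (A ^ 2) = A := by
  rw [psdSqrt_eq_sqrt (hA.pow 2), CFC.sqrt_sq A hA.nonneg]

lemma psdSqrt_mul_self (hM : M.PosSemidef) : psdSqrt M * psdSqrt M = M := by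
  rw [psdSqrt_eq_sqrt hM, CFC.sqrt_mul_sqrt_self M hM.nonneg]

lemma potentialObjective_eq (hAX : A = u • 1 - η • X) (hη : η ≠ 0) (hA : A.PosDef)
    (hM : M.PosSemidef) (htr : M.trace = 1) :
    potentialObjective η X M =
      (u + A⁻¹.trace - ((psdSqrt M - A⁻¹)ᴴ * A * (psdSqrt M - A⁻¹)).trace) / η := by
  rw [((psdSqrt_posSemidef hM).isHermitian.sub hA.inv.isHermitian).eq]
  have hAM : (A * M).trace = u - η * (X * M).trace := by
    rw [hAX, sub_mul, smul_mul_assoc, one_mul, smul_mul_assoc, trace_sub, trace_smul,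
      trace_smul, htr, smul_eq_mul, smul_eq_mul, mul_one]
  rw [potentialObjective, trace_sub_inv_mul_mul_sub_inv hA.det_pos.ne'.isUnit,
    psdSqrt_mul_self hM, hAM]
  field_simp
  ring

lemma potentialObjective_le (hAX : A = u • 1 - η • X) (hη : 0 < η) (hA : A.PosDef)
    (hM : M.PosSemidef) (htr : M.trace = 1) :
    potentialObjective η X M ≤ (u + A⁻¹.trace) / η := by
  rw [potentialObjective_eq hAX hη.ne' hA hM htr]
  refine div_le_div_of_nonneg_right ?_ hη.le
  exact sub_le_self _ (hA.posSemidef.conjTranspose_mul_mul_same _).trace_nonneg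

lemma potentialObjective_eq_iff (hAX : A = u • 1 - η • X) (hη : η ≠ 0) (hA : A.PosDef)
    (hM : M.PosSemidef) (htr : M.trace = 1) :
    potentialObjective η X M = (u + A⁻¹.trace) / η ↔ M = A⁻¹ ^ 2 := by
  rw [potentialObjective_eq hAX hη hA hM htr, div_left_inj' hη, sub_eq_self,
    hA.trace_conjTranspose_mul_mul_same_eq_zero_iff, sub_eq_zero]
  constructor
  · intro h
    rw [← psdSqrt_mul_self hM, h, sq]
  · rintro rfl
    exact psdSqrt_pow_two hA.inv.posSemidef

lemma potentialObjective_inv_sq (hAX : A = u • 1 - η • X) (hη : η ≠ 0) (hA : A.PosDef)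
    (htr : (A⁻¹ ^ 2).trace = 1) :
    potentialObjective η X (A⁻¹ ^ 2) = (u + A⁻¹.trace) / η :=
  (potentialObjective_eq_iff hAX hη hA (hA.inv.posSemidef.pow 2) htr).mpr rfl

lemma isGreatest_potentialObjective (hAX : A = u • 1 - η • X) (hη : 0 < η) (hA : A.PosDef)
    (htr : (A⁻¹ ^ 2).trace = 1) :
    IsGreatest {r | ∃ M, M.PosSemidef ∧ M.trace = 1 ∧ r = potentialObjective η X M}
      ((u + A⁻¹.trace) / η) := by
  refine ⟨⟨A⁻¹ ^ 2, hA.inv.posSemidef.pow 2, htr,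
    (potentialObjective_inv_sq hAX hη.ne' hA htr).symm⟩, ?_⟩
  rintro _ ⟨M, hM, htrM, rfl⟩
  exact potentialObjective_le hAX hη hA hM htrM

end

/-- Optimizer characterization and closed form of the regularized potential
(part of Lemma 3.1 and equation (eq:Phi)). -/
theorem potential_optimizer (n : ℕ) (hn : 1 ≤ n) (X : Matrix (Fin n) (Fin n) ℝ)
    (hX : X.IsSymm) (η : ℝ) (hη : 0 < η) :
    (∃! u : ℝ, (u • (1 : Matrix (Fin n) (Fin n) ℝ) - η • X).PosDef ∧
      (((u • (1 : Matrix (Fin n) (Fin n) ℝ) - η • X)⁻¹ ^ 2).trace = 1)) ∧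
    ∀ u : ℝ, (u • (1 : Matrix (Fin n) (Fin n) ℝ) - η • X).PosDef →
      ((u • (1 : Matrix (Fin n) (Fin n) ℝ) - η • X)⁻¹ ^ 2).trace = 1 →
      (∀ M' : Matrix (Fin n) (Fin n) ℝ, M'.PosSemidef → M'.trace = 1 →
        ((X * M').trace + (2 / η) * (psdSqrt M').trace ≤
          (X * ((u • (1 : Matrix (Fin n) (Fin n) ℝ) - η • X)⁻¹ ^ 2)).trace +
            (2 / η) * (psdSqrt ((u • (1 : Matrix (Fin n) (Fin n) ℝ) - η • X)⁻¹ ^ 2)).trace) ∧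
        ((X * M').trace + (2 / η) * (psdSqrt M').trace =
          (X * ((u • (1 : Matrix (Fin n) (Fin n) ℝ) - η • X)⁻¹ ^ 2)).trace +
            (2 / η) * (psdSqrt ((u • (1 : Matrix (Fin n) (Fin n) ℝ) - η • X)⁻¹ ^ 2)).trace →
          M' = (u • (1 : Matrix (Fin n) (Fin n) ℝ) - η • X)⁻¹ ^ 2)) ∧
      potential η X =
        (1 / η) * ((u • (1 : Matrix (Fin n) (Fin n) ℝ) - η • X)⁻¹).trace + u / η := by
  have hXh : X.IsHermitian := by rwa [IsHermitian, conjTranspose_eq_transpose_of_trivial]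
  have : Nonempty (Fin n) := ⟨⟨0, hn⟩⟩
  refine ⟨?_, fun u hA htr => ?_⟩
  · refine (existsUnique_congr fun u => ?_).mp
      (existsUnique_sum_inv_sub_sq_eq_one fun i => η * hXh.eigenvalues i)
    rw [hXh.posDef_smul_one_sub_smul_iff]
    exact and_congr_right fun h => by rw [hXh.trace_inv_smul_one_sub_smul_sq h]
  set A := u • (1 : Matrix (Fin n) (Fin n) ℝ) - η • X with hAX
  have hmax := potentialObjective_inv_sq hAX hη.ne' hA htr
  refine ⟨fun M hM htrM => ⟨?_, fun h => ?_⟩, ?_⟩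
  · exact (potentialObjective_le hAX hη hA hM htrM).trans_eq hmax.symm
  · exact (potentialObjective_eq_iff hAX hη.ne' hA hM htrM).mp (h.trans hmax)
  · rw [potential]
    exact (isGreatest_potentialObjective hAX hη hA htr).csSup_eq.trans (by ring)
end
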